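/- arXiv:1707.09400 — 10 statements merged into one kernel-verified Lean document; each statement's English description precedes it below -/
import Mathlib

section
/- If G is a finite graph with minimum degree at least k, then G has a 2-partition (V1,V2) such that every vertex of V1 has at least one neighbour in V2 and every vertex of V2 has at least k neighbours in V1. -/
/-!
Take an inclusion-minimal set `A` such that every vertex outside `A` has at least `k` neighbours
in `A`; `A = univ` qualifies because `δ(G) ≥ k`. If some `v ∈ A` had all its neighbours in `A`,
then `A \ {v}` would still qualify: `v` itself has all its `≥ k` neighbours there, and no other
vertex outside `A` is adjacent to `v`. This contradicts minimality.
-/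

namespace SimpleGraph

variable {V : Type*} (G : SimpleGraph V) (k : ℕ)

def IsKDominating (A : Set V) : Prop :=
  ∀ v ∉ A, k ≤ (G.neighborSet v ∩ A).ncard

variable {G k}

lemma isKDominating_univ (hδ : ∀ v, k ≤ (G.neighborSet v).ncard) :
    G.IsKDominating k Set.univ := by
  intro v _
  simpa using hδ v

lemma IsKDominating.diff_singleton {A : Set V} (hA : G.IsKDominating k A) {v : V}
    (hv : k ≤ (G.neighborSet v).ncard) (hvA : G.neighborSet v ⊆ A) :
    G.IsKDominating k (A \ {v}) := by
  intro w hw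
  by_cases hwv : w = v
  · subst hwv
    have : G.neighborSet w ∩ (A \ {w}) = G.neighborSet w := by
      refine Set.inter_eq_left.mpr fun u hu => ⟨hvA hu, ?_⟩
      rintro rfl
      exact G.ne_of_adj hu rfl
    rwa [this]
  · have hwA : w ∉ A := fun h => hw ⟨h, hwv⟩
    have : G.neighborSet w ∩ (A \ {v}) = G.neighborSet w ∩ A := by
      refine Set.inter_congr_left (fun u hu => ⟨hu.2, ?_⟩) fun u hu => hu.2.1
      rintro rfl
      exact hwA (hvA hu.1.symm)
    rw [this]
    exact hA w hwA

lemma exists_adj_notMem_of_minimal_isKDominating {A : Set V}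
    (hA : Minimal (G.IsKDominating k) A) {v : V} (hv : v ∈ A)
    (hδ : k ≤ (G.neighborSet v).ncard) : ∃ w ∉ A, G.Adj v w := by
  by_contra! h
  have hvA : G.neighborSet v ⊆ A := fun w hw => by_contra fun hwA => h w hwA hw
  exact (hA.2 (hA.1.diff_singleton hδ hvA) Set.sdiff_subset hv).2 rfl

end SimpleGraph

open SimpleGraph in
theorem stmt_2_general {V : Type*} [Fintype V] (G : SimpleGraph V) (k : ℕ)
    (hδ : ∀ v : V, k ≤ {w : V | G.Adj v w}.ncard) :
    ∃ A : Set V,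
      (∀ v ∈ A, ∃ w, w ∉ A ∧ G.Adj v w) ∧
      (∀ v, v ∉ A → k ≤ {w : V | G.Adj v w ∧ w ∈ A}.ncard) := by
  obtain ⟨A, hA⟩ := exists_minimal_of_wellFoundedLT (G.IsKDominating k)
    ⟨_, isKDominating_univ hδ⟩
  exact ⟨A, fun v hv => exists_adj_notMem_of_minimal_isKDominating hA hv (hδ v), hA.1⟩

/-- If δ(G) ≥ k then G has a 2-partition (V1,V2) such that every
vertex of V1 has a neighbour in V2 and every vertex of V2 has at least k
neighbours in V1. -/
theorem stmt_2 {V : Type*} [Fintype V] (G : SimpleGraph V) (k : ℕ) (hk : 0 < k)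
    (hδ : ∀ v : V, k ≤ {w : V | G.Adj v w}.ncard) :
    ∃ A : Set V,
      (∀ v ∈ A, ∃ w, w ∉ A ∧ G.Adj v w) ∧
      (∀ v, v ∉ A → k ≤ {w : V | G.Adj v w ∧ w ∈ A}.ncard) :=
  stmt_2_general G k hδ
end

section
/- Let G be a finite graph with minimum degree exactly 1 and let S1 be the set of vertices of degree 1. Then G has a 2-partition (V1,V2) such that every vertex of V1 has at least one neighbour in V2 and every vertex of V2 has at least two neighbours in V1, if and only if S1 is a stable (independent) set and every vertex in N(S1) has either two neighbours in S1 or at least one neighbour in V(G) \ (S1 ∪ N(S1)). -/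
/-!
Necessity: a leaf has too few neighbours to lie in `V₂`, so all leaves lie in `V₁` and their
neighbours in `V₂`. Hence leaves are pairwise non-adjacent, and a vertex of `N(S₁)`, which lies in
`V₂`, has two neighbours in `V₁`; those that are not leaves lie outside `S₁ ∪ N(S₁)`.

Sufficiency: put `N(S₁)` into `V₂` together with a maximal independent set `I` of the vertices having
no neighbour in `N(S₁)`. A vertex of `V₁` then has a neighbour in `N(S₁)` or, by maximality, in `I`;
every neighbour of a vertex of `I` is in `V₁`, and the degree condition on `N(S₁)` supplies two
neighbours in `V₁` for its vertices.
-/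

namespace SimpleGraph

variable {V : Type*} (G : SimpleGraph V)

def leaves : Set V := {v | (G.neighborSet v).ncard = 1}

def leafNeighbors : Set V := {v | ∃ u ∈ G.leaves, G.Adj v u}

/-- `A` is the part `V₁` of a (δ≥1, δ≥2)-bipartite-partition `(V₁, V₂) = (A, Aᶜ)`. -/
structure IsOneTwoPartition (A : Set V) : Prop where
  exists_adj_notMem : ∀ v ∈ A, ∃ w, w ∉ A ∧ G.Adj v w
  two_le_ncard_neighborSet_inter : ∀ v, v ∉ A → 2 ≤ (G.neighborSet v ∩ A).ncard

variable {G}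

lemma eq_of_adj_of_mem_leaves {u v w : V} (hu : u ∈ G.leaves) (hv : G.Adj u v)
    (hw : G.Adj u w) : v = w := by
  obtain ⟨a, ha⟩ := Set.ncard_eq_one.mp hu
  have hv' : v ∈ G.neighborSet u := hv
  have hw' : w ∈ G.neighborSet u := hw
  rw [ha] at hv' hw'
  exact hv'.trans hw'.symm

lemma exists_adj_of_mem_leaves {u : V} (hu : u ∈ G.leaves) : ∃ v, G.Adj u v :=
  Set.nonempty_of_ncard_ne_zero (ne_of_eq_of_ne hu one_ne_zero)

lemma mem_leafNeighbors_of_adj {u v : V} (hu : u ∈ G.leaves) (huv : G.Adj u v) :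
    v ∈ G.leafNeighbors :=
  ⟨u, hu, huv.symm⟩

lemma notMem_leafNeighbors_of_mem_leaves (hS : G.IsIndepSet G.leaves) {u : V}
    (hu : u ∈ G.leaves) : u ∉ G.leafNeighbors := by
  rintro ⟨v, hv, huv⟩
  exact hS hu hv huv.ne huv

lemma exists_dominating_isIndepSet_subset [Finite V] (R : Set V) :
    ∃ I ⊆ R, G.IsIndepSet I ∧ ∀ v ∈ R, v ∉ I → ∃ w ∈ I, G.Adj v w := by
  obtain ⟨I, ⟨hIR, hI⟩, hmax⟩ :=
    exists_maximal_of_wellFoundedGT (fun I : Set V => I ⊆ R ∧ G.IsIndepSet I)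
      ⟨∅, Set.empty_subset R, Set.pairwise_empty _⟩
  refine ⟨I, hIR, hI, fun v hvR hvI => ?_⟩
  by_contra! hnadj
  have hins : G.IsIndepSet (insert v I) :=
    hI.insert fun w hw _ => ⟨hnadj w hw, fun hwv => hnadj w hw hwv.symm⟩
  exact hvI (hmax ⟨Set.insert_subset hvR hIR, hins⟩ (Set.subset_insert v I) (Set.mem_insert v I))

namespace IsOneTwoPartition

variable {A : Set V}

lemma leaves_subset (hA : G.IsOneTwoPartition A) : G.leaves ⊆ A := by
  intro v hv
  by_contra hvA
  have hdeg : (G.neighborSet v).ncard = 1 := hv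
  have h2 := hA.two_le_ncard_neighborSet_inter v hvA
  have hle := Set.ncard_inter_le_ncard_left (G.neighborSet v) A
    (Set.finite_of_ncard_ne_zero (ne_of_eq_of_ne hdeg one_ne_zero))
  omega

lemma leafNeighbors_subset_compl (hA : G.IsOneTwoPartition A) : G.leafNeighbors ⊆ Aᶜ := by
  rintro v ⟨u, hu, hvu⟩ hvA
  obtain ⟨w, hwA, huw⟩ := hA.exists_adj_notMem u (hA.leaves_subset hu)
  exact hwA (eq_of_adj_of_mem_leaves hu hvu.symm huw ▸ hvA)

lemma isIndepSet_leaves (hA : G.IsOneTwoPartition A) : G.IsIndepSet G.leaves :=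
  fun _ hu _ hv _ huv =>
    hA.leafNeighbors_subset_compl (mem_leafNeighbors_of_adj hv huv.symm) (hA.leaves_subset hu)

lemma leafNeighbors_condition [Finite V] (hA : G.IsOneTwoPartition A) {v : V}
    (hv : v ∈ G.leafNeighbors) :
    2 ≤ (G.neighborSet v ∩ G.leaves).ncard ∨
      ∃ w, G.Adj v w ∧ w ∉ G.leaves ∧ w ∉ G.leafNeighbors := by
  by_contra! h
  obtain ⟨hleaves, hother⟩ := h
  have hsub : G.neighborSet v ∩ A ⊆ G.neighborSet v ∩ G.leaves := fun w ⟨hvw, hwA⟩ =>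
    ⟨hvw, by_contra fun hw => hA.leafNeighbors_subset_compl (hother w hvw hw) hwA⟩
  have h2 := hA.two_le_ncard_neighborSet_inter v (hA.leafNeighbors_subset_compl hv)
  have := Set.ncard_le_ncard hsub
  omega

end IsOneTwoPartition

lemma isOneTwoPartition_compl_leafNeighbors_union [Finite V]
    (hδ : ∀ v, 1 ≤ (G.neighborSet v).ncard) (hS : G.IsIndepSet G.leaves)
    (hN : ∀ v ∈ G.leafNeighbors, 2 ≤ (G.neighborSet v ∩ G.leaves).ncard ∨
      ∃ w, G.Adj v w ∧ w ∉ G.leaves ∧ w ∉ G.leafNeighbors)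
    {I : Set V} (hIN : ∀ v ∈ I, ∀ w, G.Adj v w → w ∉ G.leafNeighbors) (hI : G.IsIndepSet I)
    (hdom : ∀ v, (∀ w, G.Adj v w → w ∉ G.leafNeighbors) → v ∉ I → ∃ w ∈ I, G.Adj v w) :
    G.IsOneTwoPartition (G.leafNeighbors ∪ I)ᶜ := by
  have mem_of_notMem {w : V} (hwN : w ∉ G.leafNeighbors) (hwI : w ∉ I) :
      w ∈ (G.leafNeighbors ∪ I)ᶜ :=
    fun hw => hw.elim hwN hwI
  have leaves_subset : G.leaves ⊆ (G.leafNeighbors ∪ I)ᶜ := fun u hu =>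
    mem_of_notMem (notMem_leafNeighbors_of_mem_leaves hS hu) fun huI =>
      let ⟨w, huw⟩ := exists_adj_of_mem_leaves hu
      hIN u huI w huw (mem_leafNeighbors_of_adj hu huw)
  constructor
  · intro v hv
    by_cases h : ∃ w, G.Adj v w ∧ w ∈ G.leafNeighbors
    · obtain ⟨w, hvw, hwN⟩ := h
      exact ⟨w, fun hw => hw (Or.inl hwN), hvw⟩
    · push Not at h
      obtain ⟨w, hwI, hvw⟩ := hdom v h fun hvI => hv (Or.inr hvI)
      exact ⟨w, fun hw => hw (Or.inr hwI), hvw⟩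
  · intro v hv
    rcases Set.notMem_compl_iff.mp hv with hvN | hvI
    · rcases hN v hvN with h2 | ⟨w, hvw, hwS, hwN⟩
      · exact h2.trans (Set.ncard_le_ncard (Set.inter_subset_inter_right _ leaves_subset))
      · obtain ⟨u, hu, hvu⟩ := hvN
        have hwA := mem_of_notMem hwN fun hwI => hIN w hwI v hvw.symm ⟨u, hu, hvu⟩
        exact (Set.one_lt_ncard).mpr
          ⟨u, ⟨hvu, leaves_subset hu⟩, w, ⟨hvw, hwA⟩, fun huw => hwS (huw ▸ hu)⟩
    · have hall : G.neighborSet v ∩ (G.leafNeighbors ∪ I)ᶜ = G.neighborSet v :=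
        Set.inter_eq_left.mpr fun w hvw =>
          mem_of_notMem (hIN v hvI w hvw) fun hwI => hI hvI hwI (G.ne_of_adj hvw) hvw
      have hvS : v ∉ G.leaves := fun hvS =>
        let ⟨w, hvw⟩ := exists_adj_of_mem_leaves hvS
        hIN v hvI w hvw (mem_leafNeighbors_of_adj hvS hvw)
      have := hδ v
      rw [hall]
      exact Nat.lt_of_le_of_ne this (Ne.symm hvS)

theorem exists_isOneTwoPartition_iff [Finite V] (hδ : ∀ v, 1 ≤ (G.neighborSet v).ncard) :
    (∃ A, G.IsOneTwoPartition A) ↔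
      G.IsIndepSet G.leaves ∧ ∀ v ∈ G.leafNeighbors, 2 ≤ (G.neighborSet v ∩ G.leaves).ncard ∨
        ∃ w, G.Adj v w ∧ w ∉ G.leaves ∧ w ∉ G.leafNeighbors := by
  constructor
  · rintro ⟨A, hA⟩
    exact ⟨hA.isIndepSet_leaves, fun v hv => hA.leafNeighbors_condition hv⟩
  · rintro ⟨hS, hN⟩
    obtain ⟨I, hIR, hI, hdom⟩ :=
      G.exists_dominating_isIndepSet_subset {v | ∀ w, G.Adj v w → w ∉ G.leafNeighbors}
    exact ⟨_, isOneTwoPartition_compl_leafNeighbors_union hδ hS hN hIR hI hdom⟩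

end SimpleGraph

theorem stmt_3_general {V : Type*} [Fintype V] (G : SimpleGraph V)
    (hδ1 : ∀ v : V, 1 ≤ {w : V | G.Adj v w}.ncard) :
    (∃ A : Set V,
        (∀ v ∈ A, ∃ w, w ∉ A ∧ G.Adj v w) ∧
        (∀ v, v ∉ A → 2 ≤ {w : V | G.Adj v w ∧ w ∈ A}.ncard)) ↔
      ((∀ u v : V, {w : V | G.Adj u w}.ncard = 1 →
          {w : V | G.Adj v w}.ncard = 1 → ¬ G.Adj u v) ∧
       (∀ v : V, (∃ u : V, {w : V | G.Adj u w}.ncard = 1 ∧ G.Adj v u) →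
          (2 ≤ {w : V | G.Adj v w ∧ {x : V | G.Adj w x}.ncard = 1}.ncard ∨
           ∃ w : V, G.Adj v w ∧ {x : V | G.Adj w x}.ncard ≠ 1 ∧
             ¬ ∃ u : V, {x : V | G.Adj u x}.ncard = 1 ∧ G.Adj w u))) := by
  have key := G.exists_isOneTwoPartition_iff hδ1
  constructor
  · rintro ⟨A, hA₁, hA₂⟩
    obtain ⟨hS, hN⟩ := key.mp ⟨A, hA₁, hA₂⟩
    exact ⟨fun u v hu hv huv => hS hu hv huv.ne huv, hN⟩
  · rintro ⟨hS, hN⟩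
    obtain ⟨A, hA⟩ := key.mpr ⟨fun u hu v hv _ => hS u v hu hv, hN⟩
    exact ⟨A, hA.1, hA.2⟩

/-- Characterisation of graphs with minimum degree exactly 1
admitting a (δ≥1, δ≥2)-bipartite-partition. -/
theorem stmt_3 {V : Type*} [Fintype V] (G : SimpleGraph V)
    (hδ1 : ∀ v : V, 1 ≤ {w : V | G.Adj v w}.ncard)
    (hδeq : ∃ v : V, {w : V | G.Adj v w}.ncard = 1) :
    (∃ A : Set V,
        (∀ v ∈ A, ∃ w, w ∉ A ∧ G.Adj v w) ∧
        (∀ v, v ∉ A → 2 ≤ {w : V | G.Adj v w ∧ w ∈ A}.ncard)) ↔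
      ((∀ u v : V, {w : V | G.Adj u w}.ncard = 1 →
          {w : V | G.Adj v w}.ncard = 1 → ¬ G.Adj u v) ∧
       (∀ v : V, (∃ u : V, {w : V | G.Adj u w}.ncard = 1 ∧ G.Adj v u) →
          (2 ≤ {w : V | G.Adj v w ∧ {x : V | G.Adj w x}.ncard = 1}.ncard ∨
           ∃ w : V, G.Adj v w ∧ {x : V | G.Adj w x}.ncard ≠ 1 ∧
             ¬ ∃ u : V, {x : V | G.Adj u x}.ncard = 1 ∧ G.Adj w u))) :=
  stmt_3_general G hδ1
end

section
/- A digraph D has a 2-partition (V1,V2) such that every vertex of V1 has an out-neighbour in V2 and every vertex of V2 has an in-neighbour in V1, if and only if D has a spanning nebula (a spanning set of vertex-disjoint non-trivial out-stars and in-stars). -/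
/-!
The arcs from `V₁` to `V₂` form a bipartite graph without isolated vertices, and every graph
without isolated vertices has a spanning star forest: take a maximal matching, attach each unmatched
vertex as a pendant to a (necessarily matched) neighbour, and in each matching edge root the star at
an end carrying pendants. A star rooted in `V₁` is then an out-star, one rooted in `V₂` an in-star.
Conversely, the roots of the out-stars together with the leaves of the in-stars form `V₁`.
-/

/-- A (δ⁺≥1, δ⁻≥1)-bipartite-partition of a digraph `D`. -/
def HasBP {V : Type*} (D : V → V → Prop) : Prop :=
  ∃ A : Set V,
    (∀ v ∈ A, ∃ w, w ∉ A ∧ D v w) ∧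
    (∀ v, v ∉ A → ∃ w ∈ A, D w v)

/-- A spanning nebula of a digraph `D`: a spanning vertex-disjoint collection of
non-trivial out-stars and in-stars whose arcs are arcs of `D`. Each vertex is
assigned the root `r v` of its star; `out ρ` tells whether the star rooted at
`ρ` is an out-star. -/
def HasSpanningNebula {V : Type*} (D : V → V → Prop) : Prop :=
  ∃ (r : V → V) (out : V → Prop),
    (∀ v, r (r v) = r v) ∧
    (∀ v, r v ≠ v → ((out (r v) → D (r v) v) ∧ (¬ out (r v) → D v (r v)))) ∧
    (∀ v, r v = v → ∃ w, w ≠ v ∧ r w = v)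

namespace SimpleGraph

variable {V : Type*} (G : SimpleGraph V)

/-- A maximal matching, encoded by the involution exchanging the ends of each matching edge;
the unmatched vertices are its fixed points. -/
theorem exists_involutive_maximal_matching [Finite V] :
    ∃ p : V → V, Function.Involutive p ∧ (∀ x, p x ≠ x → G.Adj x (p x)) ∧
      ∀ x y, G.Adj x y → p x ≠ x ∨ p y ≠ y := by
  classical
  obtain ⟨p, ⟨hinv, hadj⟩, hmax⟩ := Set.exists_max_image
    {p : V → V | Function.Involutive p ∧ ∀ x, p x ≠ x → G.Adj x (p x)}
    (fun p => {x | p x ≠ x}.ncard) (Set.toFinite _) ⟨id, fun _ => rfl, fun _ h => (h rfl).elim⟩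
  refine ⟨p, hinv, hadj, fun x y hxy => ?_⟩
  by_contra! hfix
  obtain ⟨hx, hy⟩ := hfix
  let q : V → V := fun z => if z = x then y else if z = y then x else p z
  have hne : x ≠ y := hxy.ne
  have hq : Function.Involutive q ∧ ∀ z, q z ≠ z → G.Adj z (q z) := by
    refine ⟨fun z => ?_, fun z hz => ?_⟩
    · by_cases h1 : z = x
      · simp [q, h1, hne.symm]
      by_cases h2 : z = y
      · simp [q, h2, hne.symm]
      have h3 : p z ≠ x := fun h => h1 (by rw [← hinv z, h, hx])
      have h4 : p z ≠ y := fun h => h2 (by rw [← hinv z, h, hy])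
      simp [q, h1, h2, h3, h4, hinv z]
    · by_cases h1 : z = x
      · simpa [q, h1] using hxy
      by_cases h2 : z = y
      · simpa [q, h2, hne.symm] using hxy.symm
      simp only [q, h1, h2, if_false] at hz ⊢
      exact hadj z hz
  have hsupp : {z | q z ≠ z} = insert x (insert y {z | p z ≠ z}) := by
    ext z
    by_cases h1 : z = x
    · simp [q, h1, hne.symm]
    by_cases h2 : z = y
    · simp [q, h2, hne, hne.symm]
    simp [q, h1, h2]
  have := hmax q hq
  simp only [hsupp] at this
  rw [Set.ncard_insert_of_notMem, Set.ncard_insert_of_notMem] at this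
  · omega
  · simpa using hy
  · simp [hne, hx]

theorem exists_spanning_star_forest [Finite V] (hG : ∀ v, ∃ w, G.Adj v w) :
    ∃ r : V → V, (∀ v, r (r v) = r v) ∧ (∀ v, r v ≠ v → G.Adj v (r v)) ∧
      ∀ v, r v = v → ∃ w, w ≠ v ∧ r w = v := by
  classical
  -- `e` only breaks ties in matching edges neither of whose ends carries pendants
  obtain ⟨n, ⟨e⟩⟩ := Finite.exists_equiv_fin V
  obtain ⟨p, hinv, hpadj, hmax⟩ := G.exists_involutive_maximal_matching
  choose g hg using hG
  have hg_matched : ∀ w, p w = w → p (g w) ≠ g w := fun w hw =>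
    (hmax w (g w) (hg w)).resolve_left (not_not.2 hw)
  let HasPendant : V → Prop := fun x => ∃ w, p w = w ∧ g w = x
  let IsRoot : V → Prop := fun x => HasPendant x ∨ ¬ HasPendant (p x) ∧ e x < e (p x)
  have root_or_partner_root : ∀ x, p x ≠ x → IsRoot x ∨ IsRoot (p x) := by
    intro x hx
    simp only [IsRoot, hinv x]
    by_contra! h
    exact hx (e.injective (le_antisymm (h.1.2 h.2.1) (h.2.2 h.1.1)))
  let r : V → V := fun x => if p x = x then g x else if IsRoot x then x else p x
  have r_of_root : ∀ x, p x ≠ x → IsRoot x → r x = x := fun x hx hroot => by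
    simp [r, hx, hroot]
  have r_matched_root : ∀ x, p (r x) ≠ r x ∧ IsRoot (r x) := by
    intro x
    by_cases hx : p x = x
    · simp only [r, hx, if_true]
      exact ⟨hg_matched x hx, Or.inl ⟨x, hx, rfl⟩⟩
    by_cases hroot : IsRoot x
    · rw [r_of_root x hx hroot]; exact ⟨hx, hroot⟩
    · simp only [r, hx, hroot, if_false, hinv x]
      exact ⟨fun h => hx h.symm, (root_or_partner_root x hx).resolve_left hroot⟩
  refine ⟨r, fun v => r_of_root _ (r_matched_root v).1 (r_matched_root v).2,
    fun v hv => ?_, fun v hv => ?_⟩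
  · by_cases hx : p v = v
    · simpa [r, hx] using hg v
    by_cases hroot : IsRoot v
    · exact absurd (r_of_root v hx hroot) hv
    · simpa [r, hx, hroot] using hpadj v hx
  · obtain ⟨hmatched, hroot⟩ := r_matched_root v
    rw [hv] at hmatched hroot
    rcases hroot with ⟨w, hw, rfl⟩ | ⟨hpend, hlt⟩
    · exact ⟨w, fun h => hmatched (h ▸ hw), by simp [r, hw]⟩
    · refine ⟨p v, hmatched, ?_⟩
      have : ¬ IsRoot (p v) := by
        simp only [IsRoot, hinv v, not_or, not_and]
        exact ⟨hpend, fun _ => hlt.not_gt⟩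
      simp [r, hinv v, this, Ne.symm hmatched]

end SimpleGraph

section

variable {V : Type*} {D : V → V → Prop}

theorem HasBP.hasSpanningNebula [Finite V] (hD : HasBP D) : HasSpanningNebula D := by
  obtain ⟨A, hA, hAc⟩ := hD
  -- every edge of `G` crosses from `A` to its complement, so the side of a root orients its star
  let G := SimpleGraph.fromRel fun a b => a ∈ A ∧ b ∉ A ∧ D a b
  have hG : ∀ v, ∃ w, G.Adj v w := by
    intro v
    by_cases hv : v ∈ A
    · obtain ⟨w, hw, hvw⟩ := hA v hv
      exact ⟨w, (SimpleGraph.fromRel_adj _ _ _).2 ⟨fun h => hw (h ▸ hv), .inl ⟨hv, hw, hvw⟩⟩⟩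
    · obtain ⟨w, hw, hwv⟩ := hAc v hv
      exact ⟨w, (SimpleGraph.fromRel_adj _ _ _).2 ⟨fun h => hv (h ▸ hw), .inr ⟨hw, hv, hwv⟩⟩⟩
  obtain ⟨r, hidem, hadj, hroot⟩ := G.exists_spanning_star_forest hG
  refine ⟨r, (· ∈ A), hidem, fun v hv => ?_, hroot⟩
  obtain ⟨-, ⟨hvA, hrA, hvr⟩ | ⟨hrA, hvA, hrv⟩⟩ := (SimpleGraph.fromRel_adj _ _ _).1 (hadj v hv)
  · exact ⟨fun h => (hrA h).elim, fun _ => hvr⟩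
  · exact ⟨fun _ => hrv, fun h => (h hrA).elim⟩

theorem HasSpanningNebula.hasBP (hD : HasSpanningNebula D) : HasBP D := by
  obtain ⟨r, out, hidem, hedge, hroot⟩ := hD
  have has_leaf : ∀ v, r v = v → ∃ w, r w = v ∧ r w ≠ w := fun v hv =>
    let ⟨w, hwv, hrw⟩ := hroot v hv
    ⟨w, hrw, hrw ▸ Ne.symm hwv⟩
  -- the roots of out-stars and the leaves of in-stars
  refine ⟨{v | out (r v) ↔ r v = v}, fun v hv => ?_, fun v hv => ?_⟩
  · by_cases hrv : r v = v
    · obtain ⟨w, rfl, hw⟩ := has_leaf v hrv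
      exact ⟨w, by simp_all, (hedge w hw).1 (by simp_all)⟩
    · exact ⟨r v, by simp_all, (hedge v hrv).2 (by simp_all)⟩
  · by_cases hrv : r v = v
    · obtain ⟨w, rfl, hw⟩ := has_leaf v hrv
      exact ⟨w, by simp_all, (hedge w hw).2 (by simp_all)⟩
    · exact ⟨r v, by simp_all, (hedge v hrv).1 (by simp_all)⟩

end

/-- A digraph has a (δ⁺≥1, δ⁻≥1)-bipartite-partition if and only
if it has a spanning nebula. -/
theorem stmt_9 {V : Type*} [Fintype V] (D : V → V → Prop) :
    HasBP D ↔ HasSpanningNebula D :=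
  ⟨HasBP.hasSpanningNebula, HasSpanningNebula.hasBP⟩
end

section
/- For every integer r > 0, there exists an r-strong eulerian digraph D that admits no 2-partition (V1,V2) such that the spanning bipartite subdigraph induced by arcs between V1 and V2 is strongly connected. -/
/-- A digraph is strongly connected if every vertex is reachable from every
other vertex by a directed path. -/
def StronglyConnected {V : Type*} (D : V → V → Prop) : Prop :=
  ∀ u v : V, Relation.ReflTransGen D u v

/-!
Take a hub `z` and two copies `X₀`, `X₁` of `Fin k`, `k = r + 1`, with the arcs `z → X₀`,
`X₀ → X₁`, `X₁ → z`, and `X₁ → X₀` except for a perfect matching. Every vertex has in- and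
out-degree `k`, and deleting fewer than `r` vertices leaves two vertices on each side, which
keeps the digraph strong. For a 2-partition `(A, Aᶜ)`, every arc of `B_D` changes side of `A`
and every arc not entering `z` also changes side of `X₀`, so `v ∈ A ↔ v ∈ X₀` is preserved by
the arcs of `B_D` that do not enter `z` and flipped by those that do. Hence no arc of `B_D`
entering `z` starts at a vertex reachable from `z`, and `B_D` is not strong.
-/

open Function Relation

section Digraph

variable {V W : Type*}

theorem stronglyConnected_of_forall_reachable {R : V → V → Prop} (c : V)
    (hto : ∀ u, ReflTransGen R u c) (hfrom : ∀ v, ReflTransGen R c v) :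
    StronglyConnected R :=
  fun u v => (hto u).trans (hfrom v)

theorem StronglyConnected.map_of_surjective {R : V → V → Prop} {R' : W → W → Prop}
    (h : StronglyConnected R) (f : V → W) (hf : Surjective f)
    (hR : ∀ a b, R a b → R' (f a) (f b)) : StronglyConnected R' := by
  intro x y
  obtain ⟨a, rfl⟩ := hf x
  obtain ⟨b, rfl⟩ := hf y
  exact (h a b).lift f hR

theorem stronglyConnected_comap_iff {R : V → V → Prop} (e : W ≃ V) :
    StronglyConnected (fun a b => R (e a) (e b)) ↔ StronglyConnected R :=
  ⟨fun h => h.map_of_surjective e e.surjective fun _ _ => id,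
    fun h => h.map_of_surjective e.symm e.symm.surjective fun a b => by simp⟩

theorem not_stronglyConnected_of_potential {α : Type*} {R : V → V → Prop} (g : V → α) (z : V)
    (hR : ∀ u v, R u v → v ≠ z → g v = g u) (hz : ∀ u, R u z → g u ≠ g z) (w : V) (hw : w ≠ z) :
    ¬ StronglyConnected R := by
  intro h
  have hconst : ∀ v, ReflTransGen R z v → g v = g z := by
    intro v hv
    induction hv with
    | refl => rfl
    | @tail u v _ huv ih =>
      by_cases hvz : v = z
      · rw [hvz]
      · rw [hR u v huv hvz, ih]
  obtain hwz | ⟨u, _, huz⟩ := (h w z).cases_tail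
  · exact hw hwz.symm
  · exact hz u huz (hconst u (h z u))

-- `r`-strong except for the requirement of more than `r` vertices
def IsStrong (r : ℕ) (D : V → V → Prop) : Prop :=
  ∀ S : Set V, S.ncard < r → StronglyConnected (fun a b : {v // v ∉ S} => D a b)

def IsBalanced (D : V → V → Prop) : Prop :=
  ∀ v, Nat.card {w // D v w} = Nat.card {w // D w v}

def HasStrongTwoPartition (D : V → V → Prop) : Prop :=
  ∃ A : Set V, StronglyConnected (fun u v => D u v ∧ ¬ (u ∈ A ↔ v ∈ A))

variable {D : V → V → Prop} (e : W ≃ V)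

theorem IsStrong.comap {r : ℕ} (h : IsStrong r D) : IsStrong r (fun a b => D (e a) (e b)) := by
  intro S hS
  refine (h (e '' S) (by rwa [Set.ncard_image_of_injective S e.injective])).map_of_surjective
    (fun v => ⟨e.symm v, by simpa [Set.mem_image_equiv] using v.2⟩) ?_ fun a b => by simp
  rintro ⟨w, hw⟩
  exact ⟨⟨e w, by simpa using hw⟩, by simp⟩

theorem IsBalanced.comap (h : IsBalanced D) : IsBalanced (fun a b => D (e a) (e b)) := fun v =>
  calc Nat.card {w // D (e v) (e w)} = Nat.card {x // D (e v) x} :=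
        Nat.card_congr (e.subtypeEquiv fun _ => Iff.rfl)
    _ = Nat.card {x // D x (e v)} := h (e v)
    _ = Nat.card {w // D (e w) (e v)} := (Nat.card_congr (e.subtypeEquiv fun _ => Iff.rfl)).symm

theorem HasStrongTwoPartition.of_comap (h : HasStrongTwoPartition (fun a b => D (e a) (e b))) :
    HasStrongTwoPartition D := by
  obtain ⟨A, hA⟩ := h
  refine ⟨e.symm ⁻¹' A, (stronglyConnected_comap_iff e).mp ?_⟩
  simpa using hA

end Digraph

theorem exists_ne_of_ncard_add_two_le {α V : Type*} [Finite α] [Finite V] {f : α → V}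
    (hf : Injective f) {S : Set V} (hS : S.ncard + 2 ≤ Nat.card α) :
    ∃ i j, i ≠ j ∧ f i ∉ S ∧ f j ∉ S := by
  have hpre : (f ⁻¹' S).ncard ≤ S.ncard :=
    Set.ncard_le_ncard_of_injOn f (fun _ h => h) hf.injOn
  have : 1 < (f ⁻¹' S)ᶜ.ncard := by
    rw [Set.ncard_compl]
    omega
  obtain ⟨i, j, hi, hj, hij⟩ := (Set.one_lt_ncard_iff).mp this
  exact ⟨i, j, hij, hi, hj⟩

namespace Crown

variable {k : ℕ}

-- `none` is the hub `z`; `inl i` and `inr i` are the copies of `i` in `X₀` and `X₁`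
abbrev Vertex (k : ℕ) := Option (Fin k ⊕ Fin k)

def Arc : Vertex k → Vertex k → Prop
  | none, some (.inl _) => True
  | some (.inl _), some (.inr _) => True
  | some (.inr j), some (.inl i) => i ≠ j
  | some (.inr _), none => True
  | _, _ => False

theorem card_vertex : Fintype.card (Vertex k) = 2 * k + 1 := by
  simp [two_mul]

theorem isBalanced : IsBalanced (Arc (k := k)) := by
  suffices ∀ v, ∃ σ : Equiv.Perm (Vertex k), ∀ w, Arc v w ↔ Arc (σ w) v from fun v =>
    let ⟨σ, hσ⟩ := this v
    Nat.card_congr (σ.subtypeEquiv hσ)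
  -- the hub swaps the two sides; `inl i` and `inr i` trade their partner with the hub
  rintro (_ | i | i)
  · refine ⟨Equiv.optionCongr (Equiv.sumComm _ _), ?_⟩
    rintro (_ | j | j) <;> simp [Arc]
  · refine ⟨Equiv.swap none (some (.inr i)), ?_⟩
    rintro (_ | j | j) <;> simp only [Equiv.swap_apply_def] <;> split_ifs <;>
      simp_all [Arc, eq_comm]
  · refine ⟨Equiv.swap none (some (.inl i)), ?_⟩
    rintro (_ | j | j) <;> simp only [Equiv.swap_apply_def] <;> split_ifs <;>
      simp_all [Arc, eq_comm]

theorem not_hasStrongTwoPartition (hk : 0 < k) : ¬ HasStrongTwoPartition (Arc (k := k)) := by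
  rintro ⟨A, hA⟩
  refine not_stronglyConnected_of_potential (fun v => (v ∈ A ↔ ∃ i, v = some (.inl i))) none
    ?_ ?_ (some (.inl ⟨0, hk⟩)) (by simp) hA
  · rintro (_ | i | i) (_ | j | j) ⟨harc, hA⟩ hv <;> simp [Arc] at harc hv ⊢ <;> tauto
  · rintro (_ | i | i) ⟨harc, hA⟩ <;> simp [Arc] at harc ⊢
    tauto

theorem stronglyConnected_symm : StronglyConnected (fun a b : Vertex k => Arc a b ∨ Arc b a) := by
  refine stronglyConnected_of_forall_reachable none ?_ ?_ <;>
    rintro (_ | i | i) <;> first | rfl | exact .single (by simp [Arc])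

theorem isStrong {r : ℕ} (hr : r < k) : IsStrong r (Arc (k := k)) := by
  intro S hS
  replace hS : S.ncard + 2 ≤ k := by omega
  obtain ⟨a, b, hab, ha, hb⟩ := exists_ne_of_ncard_add_two_le
    (Option.some_injective _ |>.comp Sum.inl_injective) (S := S) (by simpa using hS)
  obtain ⟨c, d, hcd, hc, hd⟩ := exists_ne_of_ncard_add_two_le
    (Option.some_injective _ |>.comp Sum.inr_injective) (S := S) (by simpa using hS)
  simp only [comp_apply] at ha hb hc hd
  set R := fun a b : {v // v ∉ S} => Arc a.1 b.1
  have hright_out : ∀ j (hj : some (.inr j) ∉ S), ∃ i, ∃ hi : some (.inl i) ∉ S,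
      R ⟨_, hj⟩ ⟨_, hi⟩ := by
    intro j hj
    by_cases haj : a = j
    · exact ⟨b, hb, fun h => hab (haj.trans h.symm)⟩
    · exact ⟨a, ha, haj⟩
  have hleft_in : ∀ i (hi : some (.inl i) ∉ S), ∃ j, ∃ hj : some (.inr j) ∉ S,
      R ⟨_, hj⟩ ⟨_, hi⟩ := by
    intro i hi
    by_cases hci : i = c
    · exact ⟨d, hd, fun h => hcd (hci.symm.trans h)⟩
    · exact ⟨c, hc, hci⟩
  have hto : ∀ u, ReflTransGen R u ⟨_, hc⟩ := by
    rintro ⟨_ | i | j, hu⟩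
    · exact .head (show R _ ⟨_, ha⟩ from trivial) (.single trivial)
    · exact .single trivial
    · obtain ⟨i, hi, hji⟩ := hright_out j hu
      exact .head hji (.single (show R ⟨_, hi⟩ _ from trivial))
  have hfrom_right : ∀ j (hj : some (.inr j) ∉ S), ReflTransGen R ⟨_, hc⟩ ⟨_, hj⟩ := by
    intro j hj
    obtain ⟨i, hi, hci⟩ := hright_out c hc
    exact .head hci (.single (show R ⟨_, hi⟩ ⟨_, hj⟩ from trivial))
  refine stronglyConnected_of_forall_reachable _ hto ?_
  rintro ⟨_ | i | j, hv⟩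
  · exact .single trivial
  · obtain ⟨j, hj, hji⟩ := hleft_in i hv
    exact (hfrom_right j hj).tail hji
  · exact hfrom_right j hv

end Crown

theorem stmt_11_general (r : ℕ) :
    ∃ (n : ℕ) (D : Fin n → Fin n → Prop),
      -- D is r-strong
      (r < n ∧ ∀ S : Set (Fin n), S.ncard < r →
        StronglyConnected (fun a b : {v : Fin n // v ∉ S} => D a b)) ∧
      -- D is eulerian: balanced degrees and connected underlying graph
      (∀ v : Fin n, Nat.card {w : Fin n // D v w} = Nat.card {w : Fin n // D w v}) ∧
      (∀ u v : Fin n, Relation.ReflTransGen (fun a b => D a b ∨ D b a) u v) ∧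
      -- no strong 2-partition
      ¬ ∃ A : Set (Fin n),
          StronglyConnected (fun u v : Fin n => D u v ∧ ¬ (u ∈ A ↔ v ∈ A)) := by
  let e : Fin (2 * (r + 1) + 1) ≃ Crown.Vertex (r + 1) :=
    (Fintype.equivFinOfCardEq Crown.card_vertex).symm
  refine ⟨_, fun a b => Crown.Arc (e a) (e b),
    ⟨by omega, (Crown.isStrong r.lt_succ_self).comap e⟩,
    Crown.isBalanced.comap e, (stronglyConnected_comap_iff e).mpr Crown.stronglyConnected_symm,
    fun h => Crown.not_hasStrongTwoPartition r.succ_pos (HasStrongTwoPartition.of_comap e h)⟩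

/-- For every r > 0 there is an r-strong eulerian digraph with no
strong 2-partition. -/
theorem stmt_11 (r : ℕ) (hr : 0 < r) :
    ∃ (n : ℕ) (D : Fin n → Fin n → Prop),
      -- D is r-strong
      (r < n ∧ ∀ S : Set (Fin n), S.ncard < r →
        StronglyConnected (fun a b : {v : Fin n // v ∉ S} => D a b)) ∧
      -- D is eulerian: balanced degrees and connected underlying graph
      (∀ v : Fin n, Nat.card {w : Fin n // D v w} = Nat.card {w : Fin n // D w v}) ∧
      (∀ u v : Fin n, Relation.ReflTransGen (fun a b => D a b ∨ D b a) u v) ∧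
      -- no strong 2-partition
      ¬ ∃ A : Set (Fin n),
          StronglyConnected (fun u v : Fin n => D u v ∧ ¬ (u ∈ A ↔ v ∈ A)) :=
  stmt_11_general r
end

section
/- Let H be a digraph on vertex set X ∪ Y ∪ Z where X, Y, Z are disjoint sets of size r ≥ 1, containing all arcs from X to Y, from Y to Z, and from Z to X (the gadget G_r(X), possibly with extra arcs within X). Then in any 2-partition (V1,V2) of a digraph D containing this gadget such that B_D(V1,V2) is strong, the set X is not contained in a single part V_i. -/
namespace StronglyConnected

variable {V : Type*} {R : V → V → Prop} {u v : V}

theorem exists_pred_of_ne (h : StronglyConnected R) (huv : u ≠ v) : ∃ w, R w v := by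
  rcases (h u v).cases_tail with rfl | ⟨w, _, hwv⟩
  · exact absurd rfl huv
  · exact ⟨w, hwv⟩

theorem exists_succ_of_ne (h : StronglyConnected R) (huv : u ≠ v) : ∃ w, R u w := by
  rcases (h u v).cases_head with rfl | ⟨w, huw, _⟩
  · exact absurd rfl huv
  · exact ⟨w, huw⟩

end StronglyConnected

/-- The bipartite digraph `B_D(A, Aᶜ)`. -/
def crossingArcs {V : Type*} (D : V → V → Prop) (A : Set V) (u v : V) : Prop :=
  D u v ∧ ¬ (u ∈ A ↔ v ∈ A)

theorem crossingArcs_compl {V : Type*} (D : V → V → Prop) (A : Set V) :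
    crossingArcs D Aᶜ = crossingArcs D A := by
  funext u v
  simp only [crossingArcs, Set.mem_compl_iff, not_iff_not]

theorem not_subset_of_stronglyConnected_crossingArcs {V : Type*} {D : V → V → Prop}
    {X Y Z : Set V} {x z : V} (hx : x ∈ X) (hz : z ∈ Z)
    (hXY : Disjoint X Y) (hXZ : Disjoint X Z)
    (hYin : ∀ u v : V, D u v → v ∈ Y → u ∈ X)
    (hZin : ∀ u v : V, D u v → v ∈ Z → u ∈ Y)
    (hZout : ∀ u v : V, D u v → u ∈ Z → v ∈ X)
    {A : Set V} (hstrong : StronglyConnected (crossingArcs D A)) :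
    ¬ X ⊆ A := by
  intro hXA
  obtain ⟨y, hyz, hyz_cross⟩ := hstrong.exists_pred_of_ne (hXZ.ne_of_mem hx hz)
  have hy : y ∈ Y := hZin y z hyz hz
  obtain ⟨w, hwy, hwy_cross⟩ := hstrong.exists_pred_of_ne (hXY.ne_of_mem hx hy)
  have hyA : y ∉ A := fun hyA => hwy_cross (iff_of_true (hXA (hYin w y hwy hy)) hyA)
  have hzA : z ∈ A := by
    by_contra hzA
    exact hyz_cross (iff_of_false hyA hzA)
  obtain ⟨w', hzw', hzw'_cross⟩ := hstrong.exists_succ_of_ne (hXZ.ne_of_mem hx hz).symm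
  exact hzw'_cross (iff_of_true hzA (hXA (hZout z w' hzw' hz)))

theorem stmt_12_general {V : Type*} (D : V → V → Prop)
    (X Y Z : Set V) (r : ℕ) (hr : 0 < r)
    (hXY : Disjoint X Y) (hXZ : Disjoint X Z)
    (hXc : X.ncard = r) (hZc : Z.ncard = r)
    (hYin : ∀ u v : V, D u v → v ∈ Y → u ∈ X)
    (hZin : ∀ u v : V, D u v → v ∈ Z → u ∈ Y)
    (hZout : ∀ u v : V, D u v → u ∈ Z → v ∈ X)
    (A : Set V)
    (hstrong : StronglyConnected (fun u v : V => D u v ∧ ¬ (u ∈ A ↔ v ∈ A))) :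
    ¬ (X ⊆ A) ∧ ¬ (X ⊆ Aᶜ) := by
  obtain ⟨x, hx⟩ : X.Nonempty := Set.nonempty_of_ncard_ne_zero (by omega)
  obtain ⟨z, hz⟩ : Z.Nonempty := Set.nonempty_of_ncard_ne_zero (by omega)
  have hstrong_compl : StronglyConnected (crossingArcs D Aᶜ) := by
    rwa [crossingArcs_compl]
  exact ⟨not_subset_of_stronglyConnected_crossingArcs hx hz hXY hXZ hYin hZin hZout hstrong,
    not_subset_of_stronglyConnected_crossingArcs hx hz hXY hXZ hYin hZin hZout hstrong_compl⟩

/-- If a digraph `D` contains the gadget G_r(X) (all arcs X→Y,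
Y→Z, Z→X, and all arcs incident with Y ∪ Z lie inside the gadget), then in any
2-partition (A, Aᶜ) whose induced bipartite digraph is strong, X is not
contained in a single part. -/
theorem stmt_12 {V : Type*} [Fintype V] (D : V → V → Prop)
    (X Y Z : Set V) (r : ℕ) (hr : 0 < r)
    (hXY : Disjoint X Y) (hXZ : Disjoint X Z) (hYZ : Disjoint Y Z)
    (hXc : X.ncard = r) (hYc : Y.ncard = r) (hZc : Z.ncard = r)
    (hxy : ∀ x ∈ X, ∀ y ∈ Y, D x y)
    (hyz : ∀ y ∈ Y, ∀ z ∈ Z, D y z)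
    (hzx : ∀ z ∈ Z, ∀ x ∈ X, D z x)
    (hYin : ∀ u v : V, D u v → v ∈ Y → u ∈ X)
    (hYout : ∀ u v : V, D u v → u ∈ Y → v ∈ Z)
    (hZin : ∀ u v : V, D u v → v ∈ Z → u ∈ Y)
    (hZout : ∀ u v : V, D u v → u ∈ Z → v ∈ X)
    (A : Set V)
    (hstrong : StronglyConnected (fun u v : V => D u v ∧ ¬ (u ∈ A ↔ v ∈ A))) :
    ¬ (X ⊆ A) ∧ ¬ (X ⊆ Aᶜ) :=
  stmt_12_general D X Y Z r hr hXY hXZ hXc hZc hYin hZin hZout A hstrong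
end

section
/- The gadget digraph G_r(X) on vertex set X ∪ Y ∪ Z, where X, Y, Z are disjoint sets of size r and the arcs are all pairs X→Y, Y→Z and Z→X, is r-strong: deleting any set of fewer than r vertices leaves a strongly connected digraph. -/
/-- The gadget G_r(X) on vertex set (Fin 3) × (Fin r): part 0 is X, part 1 is Y,
part 2 is Z, with all arcs X→Y, Y→Z, Z→X. -/
def Gadget (r : ℕ) : Fin 3 × Fin r → Fin 3 × Fin r → Prop :=
  fun u v => v.1 = u.1 + 1

/-! Every part of the gadget has `r` vertices, so deleting fewer than `r` vertices leaves a
survivor in each part. Any vertex then reaches any other by walking around the cycle of parts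
`X → Y → Z → X`, passing through survivors. -/

theorem exists_prodMk_notMem_of_ncard_lt {α β : Type*} [Finite α] [Finite β]
    {S : Set (α × β)} (hS : S.ncard < Nat.card β) (a : α) : ∃ b, (a, b) ∉ S := by
  by_contra! h
  have hsub : Set.range (Prod.mk a : β → α × β) ⊆ S := Set.range_subset_iff.mpr h
  have hcard := Set.ncard_le_ncard hsub (Set.toFinite S)
  rw [← Set.image_univ, Set.ncard_image_of_injective _ (Prod.mk_right_injective a),
    Set.ncard_univ] at hcard
  omega

open Fin.CommRing in
theorem stronglyConnected_of_surjective_of_adj_succ {V : Type*} {n : ℕ} [NeZero n]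
    {D : V → V → Prop} (label : V → Fin n) (hlabel : Function.Surjective label)
    (hD : ∀ a b, label b = label a + 1 → D a b) : StronglyConnected D := by
  have reach : ∀ (k : ℕ) (u v : V), label v = label u + (k : Fin n) + 1 →
      Relation.ReflTransGen D u v := by
    intro k
    induction k with
    | zero => exact fun u v h => .single (hD u v (by simpa using h))
    | succ k ih =>
      intro u v h
      obtain ⟨w, hw⟩ := hlabel (label u + 1)
      refine .head (hD u w hw) (ih w v ?_)
      rw [h, hw]
      push_cast
      ring
  intro u v
  refine reach (label v - label u - 1).val u v ?_
  rw [Fin.cast_val_eq_self]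
  ring

/-- The gadget G_r(X) is r-strong. -/
theorem stmt_13 (r : ℕ) (hr : 0 < r) :
    r + 1 ≤ Fintype.card (Fin 3 × Fin r) ∧
    ∀ S : Set (Fin 3 × Fin r), S.ncard < r →
      StronglyConnected
        (fun a b : {v : Fin 3 × Fin r // v ∉ S} => Gadget r a b) := by
  refine ⟨by simp only [Fintype.card_prod, Fintype.card_fin]; omega, fun S hS => ?_⟩
  refine stronglyConnected_of_surjective_of_adj_succ (fun a => a.1.1) (fun c => ?_)
    (fun _ _ h => h)
  obtain ⟨k, hk⟩ := exists_prodMk_notMem_of_ncard_lt (by rwa [Nat.card_fin]) c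
  exact ⟨⟨(c, k), hk⟩, rfl⟩
end

section
/- Every graph G has a 2-partition (V1,V2) such that the edge-connectivity of the spanning bipartite subgraph B_G(V1,V2) is at least ⌊λ(G)/2⌋, where λ(G) is the edge-connectivity of G. -/
/-!
Take a maximum cut `(A, Aᶜ)` of `G` and let `F` disconnect the bipartite subgraph `B` of its
crossing edges; let `S` be a component of `B - F`. Every edge of `B` crossing `S` lies in `F`.
Switching the sides of `S` turns the `G`-edges crossing `S` that `B` misses into crossing edges
and those it has into non-crossing ones, so maximality forces `B` to contain at least half of the
`G`-edges crossing `S`. These disconnect `G`, hence `λ(G) ≤ 2 |F|`.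
-/

/-- The edge-connectivity of a graph: the least number of edges whose removal
disconnects the graph (0 if no edge set disconnects it). -/
noncomputable def edgeConn {V : Type*} [Fintype V] (G : SimpleGraph V) : ℕ :=
  sInf {n : ℕ | ∃ F : Set (Sym2 V), F.ncard = n ∧ ¬ (G.deleteEdges F).Connected}

namespace Set

theorem ncard_le_two_mul_ncard_inter_of_ncard_symmDiff_le {α : Type*} {s t : Set α}
    (hs : s.Finite) (ht : t.Finite) (h : (symmDiff s t).ncard ≤ s.ncard) :
    t.ncard ≤ 2 * (s ∩ t).ncard := by
  rw [Set.symmDiff_def, ncard_union_eq disjoint_sdiff_sdiff hs.sdiff ht.sdiff] at h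
  have hs' := ncard_inter_add_ncard_sdiff_eq_ncard s t hs
  have ht' := ncard_inter_add_ncard_sdiff_eq_ncard t s ht
  rw [inter_comm] at ht'
  omega

end Set

namespace SimpleGraph

variable {V : Type*}

/-- The bipartite subgraph `B_G(A, Aᶜ)`. -/
def cutGraph (G : SimpleGraph V) (A : Set V) : SimpleGraph V where
  Adj u v := G.Adj u v ∧ ¬ (u ∈ A ↔ v ∈ A)
  symm := ⟨fun _ _ h => ⟨h.1.symm, fun hiff => h.2 hiff.symm⟩⟩
  loopless := ⟨fun _ h => h.2 Iff.rfl⟩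

@[simp]
theorem cutGraph_adj {G : SimpleGraph V} {A : Set V} {u v : V} :
    (G.cutGraph A).Adj u v ↔ G.Adj u v ∧ ¬ (u ∈ A ↔ v ∈ A) :=
  Iff.rfl

theorem cutGraph_cutGraph (G : SimpleGraph V) (A S : Set V) :
    (G.cutGraph A).cutGraph S = G.cutGraph A ⊓ G.cutGraph S := by
  ext u v
  simp only [cutGraph_adj, inf_adj]
  tauto

theorem cutGraph_symmDiff (G : SimpleGraph V) (A S : Set V) :
    G.cutGraph (symmDiff A S) = symmDiff (G.cutGraph A) (G.cutGraph S) := by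
  ext u v
  simp only [cutGraph_adj, symmDiff_def, sup_adj, sdiff_adj, Set.sup_eq_union, Set.mem_union,
    Set.mem_sdiff]
  tauto

theorem edgeSet_cutGraph_symmDiff (G : SimpleGraph V) (A S : Set V) :
    (G.cutGraph (symmDiff A S)).edgeSet =
      symmDiff (G.cutGraph A).edgeSet (G.cutGraph S).edgeSet := by
  rw [cutGraph_symmDiff, symmDiff_def, symmDiff_def, edgeSet_sup, edgeSet_sdiff, edgeSet_sdiff]
  rfl

theorem ncard_edgeSet_cutGraph_le_two_mul [Finite V] {G : SimpleGraph V} {A : Set V}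
    (hA : ∀ T : Set V, (G.cutGraph T).edgeSet.ncard ≤ (G.cutGraph A).edgeSet.ncard)
    (S : Set V) :
    (G.cutGraph S).edgeSet.ncard ≤ 2 * ((G.cutGraph A).cutGraph S).edgeSet.ncard := by
  rw [cutGraph_cutGraph, edgeSet_inf]
  refine Set.ncard_le_two_mul_ncard_inter_of_ncard_symmDiff_le (Set.toFinite _)
    (Set.toFinite _) ?_
  rw [← edgeSet_cutGraph_symmDiff]
  exact hA _

theorem not_connected_deleteEdges_edgeSet_cutGraph (G : SimpleGraph V) {S : Set V} {u v : V}
    (hu : u ∈ S) (hv : v ∉ S) : ¬ (G.deleteEdges (G.cutGraph S).edgeSet).Connected := by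
  intro h
  obtain ⟨d, -, hd, hd'⟩ := (h.preconnected u v).some.exists_boundary_dart S hu hv
  have hadj := deleteEdges_adj.mp d.adj
  exact hadj.2 ⟨hadj.1, fun hiff => hd' (hiff.mp hd)⟩

theorem edgeSet_cutGraph_reachable_subset (H : SimpleGraph V) (F : Set (Sym2 V)) (u : V) :
    (H.cutGraph {w | (H.deleteEdges F).Reachable u w}).edgeSet ⊆ F := by
  intro e he
  induction e using Sym2.ind with
  | _ a b =>
    by_contra hF
    have hab : (H.deleteEdges F).Adj a b := deleteEdges_adj.mpr ⟨he.1, hF⟩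
    exact he.2 ⟨fun h => h.trans hab.reachable, fun h => h.trans hab.symm.reachable⟩

end SimpleGraph

section EdgeConn

open SimpleGraph

variable {V : Type*} [Fintype V]

theorem edgeConn_eq_zero_of_subsingleton [Subsingleton V] (G : SimpleGraph V) :
    edgeConn G = 0 := by
  refine Nat.sInf_eq_zero.mpr ?_
  rcases isEmpty_or_nonempty V with hV | hV
  · exact Or.inl ⟨∅, Set.ncard_empty _, fun h => not_nonempty_iff.mpr hV h.nonempty⟩
  · refine Or.inr (Set.eq_empty_of_forall_notMem ?_)
    rintro n ⟨F, -, hF⟩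
    exact hF ⟨fun a b => Subsingleton.elim a b ▸ Reachable.refl a⟩

theorem le_edgeConn [Nontrivial V] {H : SimpleGraph V} {k : ℕ}
    (h : ∀ F : Set (Sym2 V), ¬ (H.deleteEdges F).Connected → k ≤ F.ncard) :
    k ≤ edgeConn H := by
  refine le_csInf ⟨_, Set.univ, rfl, ?_⟩ ?_
  · rw [deleteEdges_univ]
    exact fun h => not_preconnected_bot h.preconnected
  · rintro _ ⟨F, rfl, hF⟩
    exact h F hF

theorem edgeConn_le_ncard_edgeSet_cutGraph (G : SimpleGraph V) {S : Set V} {u v : V}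
    (hu : u ∈ S) (hv : v ∉ S) : edgeConn G ≤ (G.cutGraph S).edgeSet.ncard :=
  Nat.sInf_le ⟨_, rfl, G.not_connected_deleteEdges_edgeSet_cutGraph hu hv⟩

end EdgeConn

/-- Every graph G has a 2-partition (A, Aᶜ) such that the
spanning bipartite subgraph induced by the partition has edge-connectivity at
least ⌊λ(G)/2⌋. -/
theorem stmt_16 {V : Type*} [Fintype V] (G : SimpleGraph V) :
    ∃ A : Set V,
      edgeConn G / 2 ≤ edgeConn
        { Adj := fun u v => G.Adj u v ∧ ¬ (u ∈ A ↔ v ∈ A),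
          symm := ⟨fun u v h => ⟨h.1.symm, fun hiff => h.2 hiff.symm⟩⟩,
          loopless := ⟨fun v h => h.2 Iff.rfl⟩ } := by
  obtain ⟨A, hA⟩ := Finite.exists_max fun T : Set V => (G.cutGraph T).edgeSet.ncard
  refine ⟨A, ?_⟩
  change edgeConn G / 2 ≤ edgeConn (G.cutGraph A)
  rcases subsingleton_or_nontrivial V with hV | hV
  · simp [edgeConn_eq_zero_of_subsingleton G]
  refine le_edgeConn fun F hF => ?_
  obtain ⟨u, v, huv⟩ : ∃ u v, ¬ ((G.cutGraph A).deleteEdges F).Reachable u v := by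
    by_contra! h
    exact hF ⟨h⟩
  set S := {w | ((G.cutGraph A).deleteEdges F).Reachable u w}
  calc edgeConn G / 2 ≤ (G.cutGraph S).edgeSet.ncard / 2 :=
        Nat.div_le_div_right <|
          edgeConn_le_ncard_edgeSet_cutGraph G (SimpleGraph.Reachable.refl u) huv
    _ ≤ ((G.cutGraph A).cutGraph S).edgeSet.ncard := by
        have := SimpleGraph.ncard_edgeSet_cutGraph_le_two_mul hA S
        omega
    _ ≤ F.ncard := Set.ncard_le_ncard ((G.cutGraph A).edgeSet_cutGraph_reachable_subset F u)
end

section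
/- Let M be the digraph constructed from a 3-SAT instance F with variables v_1,…,v_n and clauses C_1,…,C_m as follows: vertices are {x_i, x̄_i, y_i, z_i : i ∈ [n]} ∪ {c_j : j ∈ [m]}; arcs are y_i→x_i, y_i→x̄_i, x_i→z_i, x̄_i→z_i for each i, plus x_i→c_j whenever x_i is a literal of C_j and x̄_i→c_j whenever x̄_i is a literal of C_j. Then M admits a 2-partition (V1,V2) with every vertex of V1 having an out-neighbour in V2 and every vertex of V2 having an in-neighbour in V1, if and only if F is satisfiable. -/
/-- Vertices of the digraph M(F) built from a 3-SAT instance with n variables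
and m clauses: `x i true` is the literal vertex x_i, `x i false` is x̄_i,
together with the vertices y_i, z_i and the clause vertices c_j. -/
inductive Vtx (n m : ℕ) where
  | x : Fin n → Bool → Vtx n m
  | y : Fin n → Vtx n m
  | z : Fin n → Vtx n m
  | c : Fin m → Vtx n m

/-- The arcs of M(F): y_i → x_i, y_i → x̄_i, x_i → z_i, x̄_i → z_i, and an arc
from each literal vertex to the clause vertices containing it. The clause C_j
has literals `lit j 0, lit j 1, lit j 2`, a literal being a pair
(variable, polarity). -/
def Arcs (n m : ℕ) (lit : Fin m → Fin 3 → Fin n × Bool) :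
    Vtx n m → Vtx n m → Prop :=
  fun a b =>
    match a, b with
    | .y i, .x i' _ => i = i'
    | .x i _, .z i' => i = i'
    | .x i s, .c j => ∃ k : Fin 3, lit j k = (i, s)
    | _, _ => False

/-!
The sources y_i must lie in V1 and the sinks z_i, c_j in V2. Then z_i needs an in-neighbour
x_i or x̄_i in V1 while y_i needs an out-neighbour x_i or x̄_i in V2, so exactly one literal of
each variable lies in V1: V1 encodes a truth assignment, and c_j having an in-neighbour in V1
says exactly that this assignment satisfies C_j. Conversely the true literals together with all
y_i form such a V1.
-/

/-- A (δ⁺≥1, δ⁻≥1)-bipartite-partition (V1, V2) of the digraph `R`, with V1 = `A`. -/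
def IsBipartitePartition {V : Type*} (R : V → V → Prop) (A : Set V) : Prop :=
  (∀ v ∈ A, ∃ w, w ∉ A ∧ R v w) ∧ (∀ v, v ∉ A → ∃ w ∈ A, R w v)

namespace IsBipartitePartition

variable {V : Type*} {R : V → V → Prop} {A : Set V}

theorem notMem_of_forall_not_rel (hA : IsBipartitePartition R A) {v : V}
    (hv : ∀ w, ¬ R v w) : v ∉ A := fun hvA =>
  let ⟨w, _, hvw⟩ := hA.1 v hvA
  hv w hvw

theorem mem_of_forall_not_rel (hA : IsBipartitePartition R A) {v : V}
    (hv : ∀ w, ¬ R w v) : v ∈ A := by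
  by_contra hvA
  obtain ⟨w, _, hwv⟩ := hA.2 v hvA
  exact hv w hwv

end IsBipartitePartition

def Satisfies {n m : ℕ} (lit : Fin m → Fin 3 → Fin n × Bool) (φ : Fin n → Bool) : Prop :=
  ∀ j : Fin m, ∃ k : Fin 3, φ (lit j k).1 = (lit j k).2

namespace Arcs

variable {n m : ℕ} {lit : Fin m → Fin 3 → Fin n × Bool}

theorem not_z_left {i : Fin n} {w : Vtx n m} : ¬ Arcs n m lit (.z i) w := by
  cases w <;> exact id

theorem not_c_left {j : Fin m} {w : Vtx n m} : ¬ Arcs n m lit (.c j) w := by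
  cases w <;> exact id

theorem not_y_right {i : Fin n} {w : Vtx n m} : ¬ Arcs n m lit w (.y i) := by
  cases w <;> exact id

theorem y_left_iff {i : Fin n} {w : Vtx n m} :
    Arcs n m lit (.y i) w ↔ ∃ s, w = .x i s := by
  cases w <;> simp [Arcs, eq_comm]

theorem z_right_iff {i : Fin n} {w : Vtx n m} :
    Arcs n m lit w (.z i) ↔ ∃ s, w = .x i s := by
  cases w <;> simp [Arcs]

theorem c_right_iff {j : Fin m} {w : Vtx n m} :
    Arcs n m lit w (.c j) ↔ ∃ k, w = .x (lit j k).1 (lit j k).2 := by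
  cases w <;> simp [Arcs, Prod.ext_iff, eq_comm]

end Arcs

namespace IsBipartitePartition

variable {n m : ℕ} {lit : Fin m → Fin 3 → Fin n × Bool} {A : Set (Vtx n m)}

theorem exists_x_mem (hA : IsBipartitePartition (Arcs n m lit) A) (i : Fin n) :
    ∃ s, Vtx.x i s ∈ A := by
  obtain ⟨w, hwA, hw⟩ := hA.2 _ (hA.notMem_of_forall_not_rel fun _ => Arcs.not_z_left (i := i))
  obtain ⟨s, rfl⟩ := Arcs.z_right_iff.1 hw
  exact ⟨s, hwA⟩

theorem exists_x_notMem (hA : IsBipartitePartition (Arcs n m lit) A) (i : Fin n) :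
    ∃ s, Vtx.x i s ∉ A := by
  obtain ⟨w, hwA, hw⟩ := hA.1 _ (hA.mem_of_forall_not_rel fun _ => Arcs.not_y_right (i := i))
  obtain ⟨s, rfl⟩ := Arcs.y_left_iff.1 hw
  exact ⟨s, hwA⟩

open Classical in
noncomputable def assignment (A : Set (Vtx n m)) (i : Fin n) : Bool :=
  decide (Vtx.x i true ∈ A)

theorem x_mem_iff (hA : IsBipartitePartition (Arcs n m lit) A) (i : Fin n) (s : Bool) :
    Vtx.x i s ∈ A ↔ assignment A i = s := by
  obtain ⟨s₁, h₁⟩ := hA.exists_x_mem i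
  obtain ⟨s₀, h₀⟩ := hA.exists_x_notMem i
  cases s <;> cases s₁ <;> cases s₀ <;> simp_all [assignment]

theorem satisfies_assignment (hA : IsBipartitePartition (Arcs n m lit) A) :
    Satisfies lit (assignment A) := by
  intro j
  obtain ⟨w, hwA, hw⟩ := hA.2 _ (hA.notMem_of_forall_not_rel fun _ => Arcs.not_c_left (j := j))
  obtain ⟨k, rfl⟩ := Arcs.c_right_iff.1 hw
  exact ⟨k, (hA.x_mem_iff _ _).1 hwA⟩

end IsBipartitePartition

def trueSide {n m : ℕ} (φ : Fin n → Bool) : Set (Vtx n m) :=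
  {v | match v with
    | .y _ => True
    | .x i s => φ i = s
    | _ => False}

theorem isBipartitePartition_trueSide {n m : ℕ} {lit : Fin m → Fin 3 → Fin n × Bool}
    {φ : Fin n → Bool} (hφ : Satisfies lit φ) :
    IsBipartitePartition (Arcs n m lit) (trueSide φ) := by
  constructor
  · rintro (⟨i, s⟩ | i | i | j) hv
    · exact ⟨.z i, id, rfl⟩
    · exact ⟨.x i !(φ i), by simp [trueSide], rfl⟩
    · exact hv.elim
    · exact hv.elim
  · rintro (⟨i, s⟩ | i | i | j) hv
    · exact ⟨.y i, trivial, rfl⟩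
    · exact (hv trivial).elim
    · exact ⟨.x i (φ i), rfl, rfl⟩
    · obtain ⟨k, hk⟩ := hφ j
      exact ⟨.x (lit j k).1 (lit j k).2, hk, Arcs.c_right_iff.2 ⟨k, rfl⟩⟩

/-- M(F) has a (δ⁺≥1, δ⁻≥1)-bipartite-partition iff F is
satisfiable. -/
theorem stmt_17 (n m : ℕ) (lit : Fin m → Fin 3 → Fin n × Bool) :
    (∃ A : Set (Vtx n m),
        (∀ v ∈ A, ∃ w, w ∉ A ∧ Arcs n m lit v w) ∧
        (∀ v, v ∉ A → ∃ w ∈ A, Arcs n m lit w v)) ↔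
      (∃ φ : Fin n → Bool, ∀ j : Fin m, ∃ k : Fin 3,
          φ (lit j k).1 = (lit j k).2) :=
  ⟨fun ⟨_, hA⟩ => ⟨_, IsBipartitePartition.satisfies_assignment hA⟩,
    fun ⟨_, hφ⟩ => ⟨_, isBipartitePartition_trueSide hφ⟩⟩
end

section
/- If B is a finite out-branching (spanning out-tree) rooted at r with at least two vertices, then either B has a spanning out-galaxy (a spanning vertex-disjoint collection of non-trivial out-stars), or B − r has a spanning out-galaxy. -/
/-!
Call a vertex winning if it has a losing child; since the tree is finite this is well defined by
recursion from the leaves (it is the classification obtained by repeatedly deleting the out-star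
at the parent of a deepest leaf). Winning vertices become the centres of the stars and every
losing vertex joins the star of its parent, which is winning. This covers every vertex except
possibly a losing root `r`; but then all children of `r` are winning, so the same stars lie in
`B - r`.
-/

/-- A spanning out-galaxy of a digraph `D`: a spanning vertex-disjoint
collection of non-trivial out-stars whose arcs are arcs of `D`; each vertex is
assigned the root `ρ v` of its star. -/
def HasSpanningOutGalaxy {V : Type*} (D : V → V → Prop) : Prop :=
  ∃ ρ : V → V,
    (∀ v, ρ (ρ v) = ρ v) ∧
    (∀ v, ρ v ≠ v → D (ρ v) v) ∧
    (∀ v, ρ v = v → ∃ w, w ≠ v ∧ ρ w = v)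

theorem hasSpanningOutGalaxy_of_centres {V : Type*} (D : V → V → Prop) (win : V → Prop)
    (hpar : ∀ u u' v, D u v → D u' v → u = u')
    (hlose : ∀ v, ¬ win v → ∃ u, win u ∧ D u v)
    (hwin : ∀ v, win v → ∃ c, D v c ∧ ¬ win c) :
    HasSpanningOutGalaxy D := by
  classical
  choose! p hp_win hp_arc using hlose
  obtain ⟨ρ, hρ_win, hρ_lose⟩ : ∃ ρ : V → V, (∀ v, win v → ρ v = v) ∧ ∀ v, ¬ win v → ρ v = p v :=
    ⟨fun v => if win v then v else p v, fun _ h => if_pos h, fun _ h => if_neg h⟩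
  refine ⟨ρ, fun v => ?_, fun v hv => ?_, fun v hv => ?_⟩
  · by_cases hv : win v
    · rw [hρ_win v hv, hρ_win v hv]
    · rw [hρ_lose v hv, hρ_win _ (hp_win v hv)]
  · by_cases hv' : win v
    · exact absurd (hρ_win v hv') hv
    · rw [hρ_lose v hv']
      exact hp_arc v hv'
  · by_cases hv' : win v
    · obtain ⟨c, hvc, hc⟩ := hwin v hv'
      refine ⟨c, fun hcv => hc (hcv ▸ hv'), ?_⟩
      rw [hρ_lose c hc]
      exact hpar _ _ _ (hp_arc c hc) hvc
    · rw [hρ_lose v hv'] at hv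
      exact absurd (hv ▸ hp_win v hv') hv'

namespace Relation

variable {V : Type*} {B : V → V → Prop}

noncomputable def IsWinning (B : V → V → Prop) (hwf : WellFounded (flip B)) : V → Prop :=
  hwf.fix fun v IH => ∃ c, ∃ h : B v c, ¬ IH c h

theorem isWinning_iff (hwf : WellFounded (flip B)) (v : V) :
    IsWinning B hwf v ↔ ∃ c, B v c ∧ ¬ IsWinning B hwf c := by
  rw [IsWinning, WellFounded.fix_eq]
  exact ⟨fun ⟨c, h, hc⟩ => ⟨c, h, hc⟩, fun ⟨c, h, hc⟩ => ⟨c, h, hc⟩⟩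

/-- The last arc of a cycle through `v` enters `v` from its unique parent, which then lies on a
cycle too. -/
theorem not_transGen_self_of_reflTransGen {r v : V} (hroot : ∀ u, ¬ B u r)
    (hpar : ∀ u u' v, B u v → B u' v → u = u') (hv : ReflTransGen B r v) :
    ¬ TransGen B v v := by
  induction hv with
  | refl =>
    intro hr
    obtain ⟨u, -, hu⟩ := TransGen.tail'_iff.mp hr
    exact hroot u hu
  | @tail u w _ huw ih =>
    intro hw
    obtain ⟨x, hwx, hxw⟩ := TransGen.tail'_iff.mp hw
    obtain rfl := hpar _ _ _ hxw huw
    exact ih (TransGen.head' huw hwx)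

theorem wellFounded_flip_of_acyclic [Finite V] (hacyc : ∀ v, ¬ TransGen B v v) :
    WellFounded (flip B) := by
  have : IsTrans V (TransGen (flip B)) := ⟨fun _ _ _ => TransGen.trans⟩
  have : Std.Irrefl (TransGen (flip B)) := ⟨fun v hv => hacyc v (transGen_swap.mp hv)⟩
  exact Subrelation.wf TransGen.single (Finite.wellFounded_of_trans_of_irrefl _)

end Relation

theorem stmt_18_general {V : Type*} [Fintype V] (B : V → V → Prop) (r : V)
    (hroot : ∀ v : V, ¬ B v r)
    (hparent : ∀ v : V, v ≠ r → ∃! u : V, B u v)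
    (hreach : ∀ v : V, Relation.ReflTransGen B r v) :
    HasSpanningOutGalaxy B ∨
      HasSpanningOutGalaxy (fun a b : {v : V // v ≠ r} => B a b) := by
  have hpar : ∀ u u' v, B u v → B u' v → u = u' := fun u u' v hu hu' =>
    (hparent v fun hv => hroot u (hv ▸ hu)).unique hu hu'
  have hwf : WellFounded (flip B) := Relation.wellFounded_flip_of_acyclic fun v =>
    Relation.not_transGen_self_of_reflTransGen hroot hpar (hreach v)
  set win := Relation.IsWinning B hwf
  have hlose : ∀ v, v ≠ r → ¬ win v → ∃ u, win u ∧ B u v := fun v hv hlv =>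
    let ⟨u, hu, _⟩ := hparent v hv
    ⟨u, (Relation.isWinning_iff hwf u).mpr ⟨v, hu, hlv⟩, hu⟩
  by_cases hr : win r
  · refine .inl (hasSpanningOutGalaxy_of_centres B win hpar (fun v hv => ?_)
      fun v => (Relation.isWinning_iff hwf v).mp)
    exact hlose v (fun h => hv (h ▸ hr)) hv
  · refine .inr (hasSpanningOutGalaxy_of_centres _ (fun v => win v.1)
      (fun u u' v hu hu' => Subtype.ext (hpar u u' v hu hu')) (fun v hv => ?_) fun v hv => ?_)
    · obtain ⟨u, hu, huv⟩ := hlose v v.2 hv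
      exact ⟨⟨u, fun h => hr (h ▸ hu)⟩, hu, huv⟩
    · obtain ⟨c, hvc, hc⟩ := (Relation.isWinning_iff hwf v).mp hv
      exact ⟨⟨c, fun h => hroot v (h ▸ hvc)⟩, hvc, hc⟩

/-- A finite out-branching B rooted at r with at least two
vertices has a spanning out-galaxy, or B − r has one. -/
theorem stmt_18 {V : Type*} [Fintype V] (B : V → V → Prop) (r : V)
    (hcard : 2 ≤ Fintype.card V)
    (hroot : ∀ v : V, ¬ B v r)
    (hparent : ∀ v : V, v ≠ r → ∃! u : V, B u v)
    (hreach : ∀ v : V, Relation.ReflTransGen B r v) :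
    HasSpanningOutGalaxy B ∨
      HasSpanningOutGalaxy (fun a b : {v : V // v ≠ r} => B a b) :=
  stmt_18_general B r hroot hparent hreach
end

section
/- If an out-branching B rooted at r has an arc from r to a leaf of B, then B has a spanning out-galaxy, and consequently a 2-partition (V1,V2) in which every vertex of V1 has an out-neighbour in V2 and every vertex of V2 has an in-neighbour in V1. -/
open Relation

theorem hasSpanningOutGalaxy_of_partition {V : Type*} {D : V → V → Prop} (A : Set V)
    (hout : ∀ v ∈ A, ∃ w, w ∉ A ∧ D v w) (hin : ∀ v ∉ A, ∃! u, u ∈ A ∧ D u v) :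
    HasSpanningOutGalaxy D := by
  classical
  let ρ : V → V := fun v => if hv : v ∈ A then v else (hin v hv).exists.choose
  have hρ_mem : ∀ v, v ∈ A → ρ v = v := fun v hv => dif_pos hv
  have hρ_not_mem : ∀ v (hv : v ∉ A), ρ v ∈ A ∧ D (ρ v) v := fun v hv => by
    simpa only [ρ, dif_neg hv] using (hin v hv).exists.choose_spec
  have hρ_eq_self : ∀ v, ρ v = v → v ∈ A := fun v hv => by
    by_contra hvA
    exact hvA (hv ▸ (hρ_not_mem v hvA).1)
  refine ⟨ρ, fun v => ?_, fun v hv => ?_, fun v hv => ?_⟩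
  · by_cases hvA : v ∈ A
    · rw [hρ_mem v hvA, hρ_mem v hvA]
    · exact hρ_mem _ (hρ_not_mem v hvA).1
  · exact (hρ_not_mem v fun hvA => hv (hρ_mem v hvA)).2
  · obtain ⟨w, hwA, hvw⟩ := hout v (hρ_eq_self v hv)
    exact ⟨w, (ne_of_mem_of_not_mem (hρ_eq_self v hv) hwA).symm,
      (hin w hwA).unique (hρ_not_mem w hwA) ⟨hρ_eq_self v hv, hvw⟩⟩

/-- `A` is the set of winning positions of the game in which the players alternately move along
`R` and a player who cannot move loses. -/
theorem WellFounded.exists_set_mem_iff_exists_not_mem {V : Type*} {R : V → V → Prop}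
    (hwf : WellFounded (flip R)) : ∃ A : Set V, ∀ v, v ∈ A ↔ ∃ w, w ∉ A ∧ R v w := by
  let P : V → Prop := hwf.fix fun v IH => ∃ w, ∃ h : flip R w v, ¬ IH w h
  refine ⟨{v | P v}, fun v => ?_⟩
  change P v ↔ _
  rw [show P v = _ from hwf.fix_eq _ v]
  exact ⟨fun ⟨w, h, hw⟩ => ⟨w, hw, h⟩, fun ⟨w, hw, h⟩ => ⟨w, h, hw⟩⟩

structure IsOutBranching {V : Type*} (B : V → V → Prop) (r : V) : Prop where
  not_rel_root : ∀ v, ¬ B v r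
  existsUnique_parent : ∀ v, v ≠ r → ∃! u, B u v
  reflTransGen_root : ∀ v, ReflTransGen B r v

namespace IsOutBranching

variable {V : Type*} {B : V → V → Prop} {r : V}

theorem parent_unique (hB : IsOutBranching B r) {u u' v : V} (hu : B u v) (hu' : B u' v) :
    u = u' :=
  have hv : v ≠ r := by
    rintro rfl
    exact hB.not_rel_root u hu
  (hB.existsUnique_parent v hv).unique hu hu'

theorem not_transGen_self (hB : IsOutBranching B r) (v : V) : ¬ TransGen B v v := by
  induction hB.reflTransGen_root v with
  | refl =>
    intro hcycle
    obtain ⟨u, -, hu⟩ := TransGen.tail'_iff.mp hcycle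
    exact hB.not_rel_root u hu
  | tail _ huv ih =>
    intro hcycle
    obtain ⟨w, hvw, hwv⟩ := TransGen.tail'_iff.mp hcycle
    rw [hB.parent_unique hwv huv] at hvw
    exact ih (TransGen.head' huv hvw)

theorem wellFounded_flip [Finite V] (hB : IsOutBranching B r) : WellFounded (flip B) :=
  haveI : IsTrans V (flip (TransGen B)) := ⟨fun _ _ _ h₁ h₂ => h₂.trans h₁⟩
  haveI : Std.Irrefl (flip (TransGen B)) := ⟨hB.not_transGen_self⟩
  Subrelation.wf (r := flip (TransGen B)) (fun h => TransGen.single h) (Finite.wellFounded_of_trans_of_irrefl (flip (TransGen B)))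

end IsOutBranching

/-- If an out-branching B rooted at r has an arc from r to a leaf,
then B has a spanning out-galaxy, and consequently a (δ⁺≥1, δ⁻≥1)-bipartite-
partition. -/
theorem stmt_19 {V : Type*} [Fintype V] (B : V → V → Prop) (r : V)
    (hroot : ∀ v : V, ¬ B v r)
    (hparent : ∀ v : V, v ≠ r → ∃! u : V, B u v)
    (hreach : ∀ v : V, Relation.ReflTransGen B r v)
    (l : V) (hleaf : ∀ w : V, ¬ B l w) (hrl : B r l) :
    HasSpanningOutGalaxy B ∧
      ∃ A : Set V,
        (∀ v ∈ A, ∃ w, w ∉ A ∧ B v w) ∧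
        (∀ v, v ∉ A → ∃ w ∈ A, B w v) := by
  have hB : IsOutBranching B r := ⟨hroot, hparent, hreach⟩
  obtain ⟨A, hA⟩ := hB.wellFounded_flip.exists_set_mem_iff_exists_not_mem
  have hl : l ∉ A := fun hlA => by
    obtain ⟨w, -, hlw⟩ := (hA l).1 hlA
    exact hleaf w hlw
  have hr : r ∈ A := (hA r).2 ⟨l, hl, hrl⟩
  have hout : ∀ v ∈ A, ∃ w, w ∉ A ∧ B v w := fun v => (hA v).1
  have hin : ∀ v ∉ A, ∃! u, u ∈ A ∧ B u v := fun v hv => by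
    obtain ⟨u, hu, huniq⟩ := hparent v (ne_of_mem_of_not_mem hr hv).symm
    exact ⟨u, ⟨(hA u).2 ⟨v, hv, hu⟩, hu⟩, fun u' hu' => huniq u' hu'.2⟩
  exact ⟨hasSpanningOutGalaxy_of_partition A hout hin, A, hout, fun v hv => (hin v hv).exists⟩
end
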